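/- The only solution in integers n ≥ 0, 2 ≤ b ≤ 10, l ≥ 1 of the equation P(n) = (b+1)·b^l − 1 is (n, b, l) = (7, 2, 1). In particular, the only Thabit number of the first kind base b (2 ≤ b ≤ 10) that is a Padovan number is 5. -/
import Mathlib
set_option maxRecDepth 10000

def padovan : ℕ → ℕ
  | 0 => 1
  | 1 => 1
  | 2 => 1
  | n + 3 => padovan (n + 1) + padovan n

def pstep (M : ℕ) (s : ℕ × ℕ × ℕ) : ℕ × ℕ × ℕ := (s.2.1, s.2.2, (s.1 + s.2.1) % M)

def pok (M : ℕ) (B : List ℕ) : ℕ → ℕ × ℕ × ℕ → Bool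
  | 0, _ => true
  | k+1, s => (!decide (((s.1 + 1) % M) ∈ B)) && pok M B k (pstep M s)

lemma padovan_add_three (n : ℕ) : padovan (n+3) = padovan (n+1) + padovan n := rfl

lemma pstep_iter (M : ℕ) : ∀ n, (pstep M)^[n] (1 % M, 1 % M, 1 % M) =
    (padovan n % M, padovan (n+1) % M, padovan (n+2) % M) := by
  intro n
  induction n with
  | zero => simp [padovan]
  | succ n ih =>
      rw [Function.iterate_succ_apply', ih]
      simp only [pstep]
      have h3 : (padovan n % M + padovan (n + 1) % M) % M = padovan (n+3) % M := by
        rw [← Nat.add_mod, Nat.add_comm, ← padovan_add_three]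
      rw [h3]

lemma pad_period (M T : ℕ) (h : (pstep M)^[T] (1%M,1%M,1%M) = (1%M,1%M,1%M)) :
    ∀ n, padovan (n + T) % M = padovan n % M := by
  intro n
  have h2 : (pstep M)^[n + T] (1%M,1%M,1%M) = (pstep M)^[n] (1%M,1%M,1%M) := by
    rw [Function.iterate_add_apply, h]
  rw [pstep_iter, pstep_iter] at h2
  exact congrArg Prod.fst h2

lemma pok_spec (M : ℕ) (B : List ℕ) : ∀ k s, pok M B k s = true →
    ∀ j, j < k → ((((pstep M)^[j] s).1 + 1) % M) ∉ B := by
  intro k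
  induction k with
  | zero => intro s h j hj; omega
  | succ k ih =>
      intro s h j hj
      rw [pok, Bool.and_eq_true] at h
      cases j with
      | zero =>
          simpa using of_decide_eq_false (Bool.not_eq_true' .. ▸ h.1 : decide (((s.1+1) % M) ∈ B) = false)
      | succ j =>
          rw [Function.iterate_succ_apply]
          exact ih (pstep M s) h.2 j (by omega)

lemma pad_notin (M T : ℕ) (B : List ℕ) (hT : 0 < T)
    (hper : (pstep M)^[T] (1%M,1%M,1%M) = (1%M,1%M,1%M))
    (hok : pok M B T (1%M,1%M,1%M) = true) :
    ∀ n, ((padovan n + 1) % M) ∉ B := by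
  intro n
  induction n using Nat.strong_induction_on with
  | _ n ih =>
    by_cases h : n < T
    · have := pok_spec M B T _ hok n h
      rw [pstep_iter] at this
      simpa [Nat.mod_add_mod] using this
    · have e : n = (n - T) + T := by omega
      have e2 : (padovan ((n-T)+T) + 1) % M = (padovan (n-T) + 1) % M := by
        conv_lhs => rw [← Nat.mod_add_mod, pad_period M T hper, Nat.mod_add_mod]
      rw [e, e2]
      exact ih (n - T) (by omega)

lemma ppow_mem (b C M l0 : ℕ) (X : List ℕ) (h0 : b ^ l0 % M ∈ X)
    (hc : ∀ x ∈ X, (x * (b ^ C % M)) % M ∈ X) : ∀ j, b ^ (l0 + C * j) % M ∈ X := by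
  intro j
  induction j with
  | zero => simpa using h0
  | succ j ih =>
      have e : l0 + C * (j+1) = (l0 + C * j) + C := by ring
      rw [e, pow_add, Nat.mul_mod]
      exact hc _ ih

lemma mul_mod_helper (a x M : ℕ) : (a * x) % M = (a * (x % M)) % M := by
  simp [Nat.mul_mod]

lemma iter_chain {α : Type} (f : α → α) {a b n : ℕ} {x y z : α}
    (h : n = b + a) (h1 : f^[a] x = y) (h2 : f^[b] y = z) : f^[n] x = z := by
  rw [h, Function.iterate_add_apply, h1, h2]

lemma pok_split (M : ℕ) (B : List ℕ) : ∀ a b s,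
    pok M B (a + b) s = (pok M B a s && pok M B b ((pstep M)^[a] s)) := by
  intro a
  induction a with
  | zero => intro b s; simp [pok]
  | succ a ih =>
      intro b s
      have e : a + 1 + b = (a + b) + 1 := by omega
      rw [e, pok, pok, ih, Function.iterate_succ_apply, Bool.and_assoc]

lemma pok_chain (M : ℕ) (B : List ℕ) {a b n : ℕ} {s y : ℕ × ℕ × ℕ}
    (h : n = a + b) (h1 : (pstep M)^[a] s = y)
    (h2 : pok M B a s = true) (h3 : pok M B b y = true) :
    pok M B n s = true := by
  rw [h, pok_split, h2, h1, h3]; rfl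

-- growth lemmas
lemma pad_big_aux : ∀ n, 816 ≤ padovan (n + 25) ∧ 816 ≤ padovan (n + 26) := by
  intro n
  induction n with
  | zero => exact ⟨by decide, by decide⟩
  | succ n ih =>
      constructor
      · have e : n + 1 + 25 = n + 26 := by omega
        rw [e]; exact ih.2
      have e : n + 1 + 26 = (n + 24) + 3 := by omega
      rw [e, padovan_add_three]
      have e2 : n + 24 + 1 = n + 25 := by omega
      rw [e2]
      exact le_trans ih.1 (Nat.le_add_right _ _)

lemma pad_big (n : ℕ) (h : 25 ≤ n) : 816 ≤ padovan n := by
  have e : n = (n - 25) + 25 := by omega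
  rw [e]; exact (pad_big_aux (n - 25)).1

lemma pad_ne (v : ℕ) (h816 : v < 816) (hv : ∀ i, i < 25 → padovan i ≠ v) :
    ∀ n, padovan n ≠ v := by
  intro n h
  by_cases hn : n < 25
  · exact hv n hn h
  · have := pad_big n (by omega); omega

lemma pad_eq_five : ∀ n, padovan n = 5 → n = 7 := by
  intro n h
  by_cases hn : n < 25
  · revert h; revert hn; revert n; decide
  · have := pad_big n (by omega); omega

def B35 : List ℕ := [7]
lemma per_35 : (pstep 35)^[48] (1%35,1%35,1%35) = (1%35,1%35,1%35) := by
  have e0 : (pstep 35)^[48] (1,1,1) = (1,1,1) := by decide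
  have E0 := e0
  exact E0
lemma ok_35 : pok 35 B35 48 (1%35,1%35,1%35) = true := by
  have e0 : (pstep 35)^[48] (1,1,1) = (1,1,1) := by decide
  have o0 : pok 35 B35 48 (1,1,1) = true := by decide
  have O0 : pok 35 B35 48 (1,1,1) = true := o0
  exact O0
lemma notin_35 : ∀ n, ((padovan n + 1) % 35) ∉ B35 :=
  pad_notin 35 48 B35 (by norm_num) per_35 ok_35

def B112 : List ℕ := [56]
lemma per_112 : (pstep 112)^[336] (1%112,1%112,1%112) = (1%112,1%112,1%112) := by
  have e0 : (pstep 112)^[336] (1,1,1) = (1,1,1) := by decide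
  have E0 := e0
  exact E0
lemma ok_112 : pok 112 B112 336 (1%112,1%112,1%112) = true := by
  have e0 : (pstep 112)^[336] (1,1,1) = (1,1,1) := by decide
  have o0 : pok 112 B112 336 (1,1,1) = true := by decide
  have O0 : pok 112 B112 336 (1,1,1) = true := o0
  exact O0
lemma notin_112 : ∀ n, ((padovan n + 1) % 112) ∉ B112 :=
  pad_notin 112 336 B112 (by norm_num) per_112 ok_112

def B2475 : List ℕ := [36, 108, 126, 279, 306, 324, 378, 441, 738, 837, 918, 927, 972, 1071, 1134, 1323, 1494, 1692, 2007, 2214]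
lemma per_2475 : (pstep 2475)^[1560] (1%2475,1%2475,1%2475) = (1%2475,1%2475,1%2475) := by
  have e0 : (pstep 2475)^[1008] (1,1,1) = (206,1981,36) := by decide
  have e1 : (pstep 2475)^[552] (206,1981,36) = (1,1,1) := by decide
  have E0 := e0
  have E1 : (pstep 2475)^[1560] (1,1,1) = (1,1,1) := iter_chain _ (by norm_num) E0 e1
  exact E1
lemma ok_2475 : pok 2475 B2475 1560 (1%2475,1%2475,1%2475) = true := by
  have e0 : (pstep 2475)^[1008] (1,1,1) = (206,1981,36) := by decide
  have o0 : pok 2475 B2475 1008 (1,1,1) = true := by decide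
  have e1 : (pstep 2475)^[552] (206,1981,36) = (1,1,1) := by decide
  have o1 : pok 2475 B2475 552 (206,1981,36) = true := by decide
  have O1 : pok 2475 B2475 552 (206,1981,36) = true := o1
  have O0 : pok 2475 B2475 1560 (1,1,1) = true := pok_chain 2475 B2475 (by norm_num) e0 o0 O1
  exact O0
lemma notin_2475 : ∀ n, ((padovan n + 1) % 2475) ∉ B2475 :=
  pad_notin 2475 1560 B2475 (by norm_num) per_2475 ok_2475

def B7184 : List ℕ := [64, 110, 224, 288, 624, 640, 656, 784, 848, 944, 1008, 1100, 1296, 1408, 2240, 2256, 2880, 2896, 3816, 4288, 4304, 4928, 4944, 5776, 5888, 6176, 6240, 6336, 6400, 6528, 6544, 6560, 6896, 6960, 7120]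
lemma per_7184 : (pstep 7184)^[224] (1%7184,1%7184,1%7184) = (1%7184,1%7184,1%7184) := by
  have e0 : (pstep 7184)^[224] (1,1,1) = (1,1,1) := by decide
  have E0 := e0
  exact E0
lemma ok_7184 : pok 7184 B7184 224 (1%7184,1%7184,1%7184) = true := by
  have e0 : (pstep 7184)^[224] (1,1,1) = (1,1,1) := by decide
  have o0 : pok 7184 B7184 224 (1,1,1) = true := by decide
  have O0 : pok 7184 B7184 224 (1,1,1) = true := o0
  exact O0
lemma notin_7184 : ∀ n, ((padovan n + 1) % 7184) ∉ B7184 :=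
  pad_notin 7184 224 B7184 (by norm_num) per_7184 ok_7184

def B8704 : List ℕ := [3584, 5120]
lemma per_8704 : (pstep 8704)^[16128] (1%8704,1%8704,1%8704) = (1%8704,1%8704,1%8704) := by
  have e0 : (pstep 8704)^[1008] (1,1,1) = (417,2497,2561) := by decide
  have e1 : (pstep 8704)^[1008] (417,2497,2561) = (5441,6529,1) := by decide
  have e2 : (pstep 8704)^[1008] (5441,6529,1) = (5857,321,2561) := by decide
  have e3 : (pstep 8704)^[1008] (5857,321,2561) = (2177,4353,1) := by decide
  have e4 : (pstep 8704)^[1008] (2177,4353,1) = (2593,6849,2561) := by decide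
  have e5 : (pstep 8704)^[1008] (2593,6849,2561) = (7617,2177,1) := by decide
  have e6 : (pstep 8704)^[1008] (7617,2177,1) = (8033,4673,2561) := by decide
  have e7 : (pstep 8704)^[1008] (8033,4673,2561) = (4353,1,1) := by decide
  have e8 : (pstep 8704)^[1008] (4353,1,1) = (4769,2497,2561) := by decide
  have e9 : (pstep 8704)^[1008] (4769,2497,2561) = (1089,6529,1) := by decide
  have e10 : (pstep 8704)^[1008] (1089,6529,1) = (1505,321,2561) := by decide
  have e11 : (pstep 8704)^[1008] (1505,321,2561) = (6529,4353,1) := by decide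
  have e12 : (pstep 8704)^[1008] (6529,4353,1) = (6945,6849,2561) := by decide
  have e13 : (pstep 8704)^[1008] (6945,6849,2561) = (3265,2177,1) := by decide
  have e14 : (pstep 8704)^[1008] (3265,2177,1) = (3681,4673,2561) := by decide
  have e15 : (pstep 8704)^[1008] (3681,4673,2561) = (1,1,1) := by decide
  have E0 := e0
  have E1 : (pstep 8704)^[2016] (1,1,1) = (5441,6529,1) := iter_chain _ (by norm_num) E0 e1
  have E2 : (pstep 8704)^[3024] (1,1,1) = (5857,321,2561) := iter_chain _ (by norm_num) E1 e2
  have E3 : (pstep 8704)^[4032] (1,1,1) = (2177,4353,1) := iter_chain _ (by norm_num) E2 e3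
  have E4 : (pstep 8704)^[5040] (1,1,1) = (2593,6849,2561) := iter_chain _ (by norm_num) E3 e4
  have E5 : (pstep 8704)^[6048] (1,1,1) = (7617,2177,1) := iter_chain _ (by norm_num) E4 e5
  have E6 : (pstep 8704)^[7056] (1,1,1) = (8033,4673,2561) := iter_chain _ (by norm_num) E5 e6
  have E7 : (pstep 8704)^[8064] (1,1,1) = (4353,1,1) := iter_chain _ (by norm_num) E6 e7
  have E8 : (pstep 8704)^[9072] (1,1,1) = (4769,2497,2561) := iter_chain _ (by norm_num) E7 e8
  have E9 : (pstep 8704)^[10080] (1,1,1) = (1089,6529,1) := iter_chain _ (by norm_num) E8 e9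
  have E10 : (pstep 8704)^[11088] (1,1,1) = (1505,321,2561) := iter_chain _ (by norm_num) E9 e10
  have E11 : (pstep 8704)^[12096] (1,1,1) = (6529,4353,1) := iter_chain _ (by norm_num) E10 e11
  have E12 : (pstep 8704)^[13104] (1,1,1) = (6945,6849,2561) := iter_chain _ (by norm_num) E11 e12
  have E13 : (pstep 8704)^[14112] (1,1,1) = (3265,2177,1) := iter_chain _ (by norm_num) E12 e13
  have E14 : (pstep 8704)^[15120] (1,1,1) = (3681,4673,2561) := iter_chain _ (by norm_num) E13 e14
  have E15 : (pstep 8704)^[16128] (1,1,1) = (1,1,1) := iter_chain _ (by norm_num) E14 e15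
  exact E15
lemma ok_8704 : pok 8704 B8704 16128 (1%8704,1%8704,1%8704) = true := by
  have e0 : (pstep 8704)^[1008] (1,1,1) = (417,2497,2561) := by decide
  have o0 : pok 8704 B8704 1008 (1,1,1) = true := by decide
  have e1 : (pstep 8704)^[1008] (417,2497,2561) = (5441,6529,1) := by decide
  have o1 : pok 8704 B8704 1008 (417,2497,2561) = true := by decide
  have e2 : (pstep 8704)^[1008] (5441,6529,1) = (5857,321,2561) := by decide
  have o2 : pok 8704 B8704 1008 (5441,6529,1) = true := by decide
  have e3 : (pstep 8704)^[1008] (5857,321,2561) = (2177,4353,1) := by decide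
  have o3 : pok 8704 B8704 1008 (5857,321,2561) = true := by decide
  have e4 : (pstep 8704)^[1008] (2177,4353,1) = (2593,6849,2561) := by decide
  have o4 : pok 8704 B8704 1008 (2177,4353,1) = true := by decide
  have e5 : (pstep 8704)^[1008] (2593,6849,2561) = (7617,2177,1) := by decide
  have o5 : pok 8704 B8704 1008 (2593,6849,2561) = true := by decide
  have e6 : (pstep 8704)^[1008] (7617,2177,1) = (8033,4673,2561) := by decide
  have o6 : pok 8704 B8704 1008 (7617,2177,1) = true := by decide
  have e7 : (pstep 8704)^[1008] (8033,4673,2561) = (4353,1,1) := by decide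
  have o7 : pok 8704 B8704 1008 (8033,4673,2561) = true := by decide
  have e8 : (pstep 8704)^[1008] (4353,1,1) = (4769,2497,2561) := by decide
  have o8 : pok 8704 B8704 1008 (4353,1,1) = true := by decide
  have e9 : (pstep 8704)^[1008] (4769,2497,2561) = (1089,6529,1) := by decide
  have o9 : pok 8704 B8704 1008 (4769,2497,2561) = true := by decide
  have e10 : (pstep 8704)^[1008] (1089,6529,1) = (1505,321,2561) := by decide
  have o10 : pok 8704 B8704 1008 (1089,6529,1) = true := by decide
  have e11 : (pstep 8704)^[1008] (1505,321,2561) = (6529,4353,1) := by decide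
  have o11 : pok 8704 B8704 1008 (1505,321,2561) = true := by decide
  have e12 : (pstep 8704)^[1008] (6529,4353,1) = (6945,6849,2561) := by decide
  have o12 : pok 8704 B8704 1008 (6529,4353,1) = true := by decide
  have e13 : (pstep 8704)^[1008] (6945,6849,2561) = (3265,2177,1) := by decide
  have o13 : pok 8704 B8704 1008 (6945,6849,2561) = true := by decide
  have e14 : (pstep 8704)^[1008] (3265,2177,1) = (3681,4673,2561) := by decide
  have o14 : pok 8704 B8704 1008 (3265,2177,1) = true := by decide
  have e15 : (pstep 8704)^[1008] (3681,4673,2561) = (1,1,1) := by decide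
  have o15 : pok 8704 B8704 1008 (3681,4673,2561) = true := by decide
  have O15 : pok 8704 B8704 1008 (3681,4673,2561) = true := o15
  have O14 : pok 8704 B8704 2016 (3265,2177,1) = true := pok_chain 8704 B8704 (by norm_num) e14 o14 O15
  have O13 : pok 8704 B8704 3024 (6945,6849,2561) = true := pok_chain 8704 B8704 (by norm_num) e13 o13 O14
  have O12 : pok 8704 B8704 4032 (6529,4353,1) = true := pok_chain 8704 B8704 (by norm_num) e12 o12 O13
  have O11 : pok 8704 B8704 5040 (1505,321,2561) = true := pok_chain 8704 B8704 (by norm_num) e11 o11 O12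
  have O10 : pok 8704 B8704 6048 (1089,6529,1) = true := pok_chain 8704 B8704 (by norm_num) e10 o10 O11
  have O9 : pok 8704 B8704 7056 (4769,2497,2561) = true := pok_chain 8704 B8704 (by norm_num) e9 o9 O10
  have O8 : pok 8704 B8704 8064 (4353,1,1) = true := pok_chain 8704 B8704 (by norm_num) e8 o8 O9
  have O7 : pok 8704 B8704 9072 (8033,4673,2561) = true := pok_chain 8704 B8704 (by norm_num) e7 o7 O8
  have O6 : pok 8704 B8704 10080 (7617,2177,1) = true := pok_chain 8704 B8704 (by norm_num) e6 o6 O7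
  have O5 : pok 8704 B8704 11088 (2593,6849,2561) = true := pok_chain 8704 B8704 (by norm_num) e5 o5 O6
  have O4 : pok 8704 B8704 12096 (2177,4353,1) = true := pok_chain 8704 B8704 (by norm_num) e4 o4 O5
  have O3 : pok 8704 B8704 13104 (5857,321,2561) = true := pok_chain 8704 B8704 (by norm_num) e3 o3 O4
  have O2 : pok 8704 B8704 14112 (5441,6529,1) = true := pok_chain 8704 B8704 (by norm_num) e2 o2 O3
  have O1 : pok 8704 B8704 15120 (417,2497,2561) = true := pok_chain 8704 B8704 (by norm_num) e1 o1 O2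
  have O0 : pok 8704 B8704 16128 (1,1,1) = true := pok_chain 8704 B8704 (by norm_num) e0 o0 O1
  exact O0
lemma notin_8704 : ∀ n, ((padovan n + 1) % 8704) ∉ B8704 :=
  pad_notin 8704 16128 B8704 (by norm_num) per_8704 ok_8704

def B14368 : List ℕ := [96, 384, 480, 608, 672, 832, 928, 1056, 1088, 1536, 1728, 1920, 1984, 2208, 2272, 2336, 2368, 2400, 2432, 2528, 2656, 2688, 2752, 3008, 3040, 3328, 3360, 3424, 3616, 3712, 3744, 4160, 4192, 4224, 4256, 4352, 4448, 4640, 4704, 4768, 4896, 5024, 5216, 5280, 5440, 5536, 5728, 5824, 6144, 6432, 6496, 6592, 6688, 6752, 6912, 6976, 7392, 7456, 7616, 7680, 7776, 7872, 7936, 8224, 8544, 8640, 8832, 8928, 9088, 9152, 9344, 9472, 9600, 9664, 9728, 9920, 10016, 10112, 10144, 10176, 10208, 10624, 10656, 10752, 10944, 11008, 11040, 11328, 11360, 11616, 11680, 11712, 11840, 11936, 11968, 12000, 12032, 12096, 12160, 12384, 12448, 12640, 12832, 13280, 13312, 13440, 13536, 13696, 13760, 13888, 13984, 14272]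
lemma per_14368 : (pstep 14368)^[224] (1%14368,1%14368,1%14368) = (1%14368,1%14368,1%14368) := by
  have e0 : (pstep 14368)^[224] (1,1,1) = (1,1,1) := by decide
  have E0 := e0
  exact E0
lemma ok_14368 : pok 14368 B14368 224 (1%14368,1%14368,1%14368) = true := by
  have e0 : (pstep 14368)^[224] (1,1,1) = (1,1,1) := by decide
  have o0 : pok 14368 B14368 224 (1,1,1) = true := by decide
  have O0 : pok 14368 B14368 224 (1,1,1) = true := o0
  exact O0
lemma notin_14368 : ∀ n, ((padovan n + 1) % 14368) ∉ B14368 :=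
  pad_notin 14368 224 B14368 (by norm_num) per_14368 ok_14368

def B21465 : List ℕ := [810, 1215, 7695, 8100, 10530, 12150, 12555, 12960, 14175, 15795, 16605, 18225, 19440]
lemma per_21465 : (pstep 21465)^[2808] (1%21465,1%21465,1%21465) = (1%21465,1%21465,1%21465) := by
  have e0 : (pstep 21465)^[1008] (1,1,1) = (21176,6841,17361) := by decide
  have e1 : (pstep 21465)^[1008] (21176,6841,17361) = (1756,16126,2756) := by decide
  have e2 : (pstep 21465)^[792] (1756,16126,2756) = (1,1,1) := by decide
  have E0 := e0
  have E1 : (pstep 21465)^[2016] (1,1,1) = (1756,16126,2756) := iter_chain _ (by norm_num) E0 e1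
  have E2 : (pstep 21465)^[2808] (1,1,1) = (1,1,1) := iter_chain _ (by norm_num) E1 e2
  exact E2
lemma ok_21465 : pok 21465 B21465 2808 (1%21465,1%21465,1%21465) = true := by
  have e0 : (pstep 21465)^[1008] (1,1,1) = (21176,6841,17361) := by decide
  have o0 : pok 21465 B21465 1008 (1,1,1) = true := by decide
  have e1 : (pstep 21465)^[1008] (21176,6841,17361) = (1756,16126,2756) := by decide
  have o1 : pok 21465 B21465 1008 (21176,6841,17361) = true := by decide
  have e2 : (pstep 21465)^[792] (1756,16126,2756) = (1,1,1) := by decide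
  have o2 : pok 21465 B21465 792 (1756,16126,2756) = true := by decide
  have O2 : pok 21465 B21465 792 (1756,16126,2756) = true := o2
  have O1 : pok 21465 B21465 1800 (21176,6841,17361) = true := pok_chain 21465 B21465 (by norm_num) e1 o1 O2
  have O0 : pok 21465 B21465 2808 (1,1,1) = true := pok_chain 21465 B21465 (by norm_num) e0 o0 O1
  exact O0
lemma notin_21465 : ∀ n, ((padovan n + 1) % 21465) ∉ B21465 :=
  pad_notin 21465 2808 B21465 (by norm_num) per_21465 ok_21465

def B28736 : List ℕ := [90, 192, 442, 474, 826, 960, 1216, 1594, 1664, 1856, 2112, 2176, 2426, 3066, 3072, 3194, 3258, 3418, 3456, 3610, 4314, 4506, 4570, 4602, 4672, 4736, 4800, 4858, 4890, 5050, 5056, 5114, 5274, 5306, 5312, 5376, 5504, 5978, 6080, 6266, 6330, 6426, 6490, 6746, 6848, 7066, 7290, 7578, 7610, 8320, 8410, 8442, 8570, 8858, 9178, 9280, 9408, 9434, 9658, 9978, 10202, 10362, 10394, 10432, 10560, 10880, 11072, 11226, 11418, 11456, 11930, 12122, 12864, 12954, 12986, 13146, 13370, 13376, 13690, 13914, 14170,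 14490, 14778, 14906, 14938, 15360, 15738, 15770, 15872, 16058, 16282, 16602, 16858, 16922, 17018, 17082, 17280, 17370, 17664, 17856, 18042, 18074, 18176, 18234, 18298, 18304, 18458, 18490, 18746, 18778, 18842, 19034, 19328, 19456, 19738, 19930, 20090, 20154, 20282, 20416, 20922, 21754, 21888, 22522, 22656, 22874, 22906, 23232, 23258, 23360, 23424, 23680, 23936, 24000, 24064, 24090, 24154, 24218, 24250, 24442, 24602, 24890, 25018, 25280, 25338, 25664, 25722, 25754, 25978, 26106, 26330, 26362, 26560, 26624, 26746, 26880, 27066, 27072, 27194, 27482, 27520, 27642, 27776, 27834, 27866, 27930, 27994, 28544]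
lemma per_28736 : (pstep 28736)^[224] (1%28736,1%28736,1%28736) = (1%28736,1%28736,1%28736) := by
  have e0 : (pstep 28736)^[224] (1,1,1) = (1,1,1) := by decide
  have E0 := e0
  exact E0
lemma ok_28736 : pok 28736 B28736 224 (1%28736,1%28736,1%28736) = true := by
  have e0 : (pstep 28736)^[224] (1,1,1) = (1,1,1) := by decide
  have o0 : pok 28736 B28736 224 (1,1,1) = true := by decide
  have O0 : pok 28736 B28736 224 (1,1,1) = true := o0
  exact O0
lemma notin_28736 : ∀ n, ((padovan n + 1) % 28736) ∉ B28736 :=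
  pad_notin 28736 224 B28736 (by norm_num) per_28736 ok_28736

def B30800 : List ℕ := [576, 1136, 2256, 4608, 6064, 9088, 11104, 13344, 14352, 15472, 17712, 17824, 18048, 18496, 19392, 21184, 22416, 24768, 25328, 27232]
lemma per_30800 : (pstep 30800)^[1680] (1%30800,1%30800,1%30800) = (1%30800,1%30800,1%30800) := by
  have e0 : (pstep 30800)^[1008] (1,1,1) = (26881,18481,17361) := by decide
  have e1 : (pstep 30800)^[672] (26881,18481,17361) = (1,1,1) := by decide
  have E0 := e0
  have E1 : (pstep 30800)^[1680] (1,1,1) = (1,1,1) := iter_chain _ (by norm_num) E0 e1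
  exact E1
lemma ok_30800 : pok 30800 B30800 1680 (1%30800,1%30800,1%30800) = true := by
  have e0 : (pstep 30800)^[1008] (1,1,1) = (26881,18481,17361) := by decide
  have o0 : pok 30800 B30800 1008 (1,1,1) = true := by decide
  have e1 : (pstep 30800)^[672] (26881,18481,17361) = (1,1,1) := by decide
  have o1 : pok 30800 B30800 672 (26881,18481,17361) = true := by decide
  have O1 : pok 30800 B30800 672 (26881,18481,17361) = true := o1
  have O0 : pok 30800 B30800 1680 (1,1,1) = true := pok_chain 30800 B30800 (by norm_num) e0 o0 O1
  exact O0
lemma notin_30800 : ∀ n, ((padovan n + 1) % 30800) ∉ B30800 :=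
  pad_notin 30800 1680 B30800 (by norm_num) per_30800 ok_30800

def B36575 : List ℕ := [30, 150, 425, 600, 750, 1700, 1825, 1850, 2125, 2400, 2950, 3000, 3475, 3750, 5150, 5925, 6575, 6800, 7075, 7300, 7400, 8500, 8675, 8775, 9050, 9125, 9250, 9600, 9675, 10625, 11425, 11800, 12000, 12575, 12975, 13450, 13725, 13900, 13950, 14750, 15000, 15325, 16550, 17225, 17375, 18075, 18325, 18475, 18750, 19025, 19225, 19575, 20550, 20600, 21650, 21775, 21975, 22425, 22975, 23425, 23700, 24725, 25750, 26275, 26300, 27200, 28300, 29075, 29200, 29600, 29625, 29850, 30575, 30675, 31775, 31950, 32050, 32325, 32875, 32925, 33175, 34000, 34700, 35075, 35100, 35375, 35650, 35725, 36200, 36275, 36500]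
lemma per_36575 : (pstep 36575)^[720] (1%36575,1%36575,1%36575) = (1%36575,1%36575,1%36575) := by
  have e0 : (pstep 36575)^[720] (1,1,1) = (1,1,1) := by decide
  have E0 := e0
  exact E0
lemma ok_36575 : pok 36575 B36575 720 (1%36575,1%36575,1%36575) = true := by
  have e0 : (pstep 36575)^[720] (1,1,1) = (1,1,1) := by decide
  have o0 : pok 36575 B36575 720 (1,1,1) = true := by decide
  have O0 : pok 36575 B36575 720 (1,1,1) = true := o0
  exact O0
lemma notin_36575 : ∀ n, ((padovan n + 1) % 36575) ∉ B36575 :=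
  pad_notin 36575 720 B36575 (by norm_num) per_36575 ok_36575

def B46420 : List ℕ := [20, 80, 180, 320, 680, 720, 1180, 1280, 1400, 1620, 2720, 2740, 2880, 3980, 4020, 4720, 5080, 5120, 5140, 5160, 5300, 5460, 5600, 5780, 5800, 6120, 6480, 7880, 8660, 10620, 10840, 10880, 10960, 11520, 11900, 12600, 14260, 14580, 15920, 16080, 17260, 17900, 18880, 20320, 20480, 20560, 20640, 21200, 21220, 21840, 22400, 22620, 23120, 23200, 23380, 23560, 24480, 24500, 24660, 24740, 25180, 25920, 26360, 29100, 29800, 30660, 31520, 33240, 33460, 34180, 34640, 34820, 34860, 35220, 35500, 35820, 36100, 36140, 36180, 36260, 36980, 38380, 38460, 40120, 40660, 40940, 40980, 41000, 42480, 43180, 43360, 43520, 43620, 43840, 43860, 43880, 44060, 44980, 45060, 45720, 45780, 46060, 46080, 46260, 46380]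
lemma per_46420 : (pstep 46420)^[840] (1%46420,1%46420,1%46420) = (1%46420,1%46420,1%46420) := by
  have e0 : (pstep 46420)^[840] (1,1,1) = (1,1,1) := by decide
  have E0 := e0
  exact E0
lemma ok_46420 : pok 46420 B46420 840 (1%46420,1%46420,1%46420) = true := by
  have e0 : (pstep 46420)^[840] (1,1,1) = (1,1,1) := by decide
  have o0 : pok 46420 B46420 840 (1,1,1) = true := by decide
  have O0 : pok 46420 B46420 840 (1,1,1) = true := o0
  exact O0
lemma notin_46420 : ∀ n, ((padovan n + 1) % 46420) ∉ B46420 :=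
  pad_notin 46420 840 B46420 (by norm_num) per_46420 ok_46420

lemma kill_2_4_0 : ∀ n l, 9 ≤ l → l % 4 = 0 → padovan n + 1 ≠ 3 * 2 ^ l := by
  intro n l h1 h2 heq
  obtain ⟨j, rfl⟩ : ∃ j, l = 12 + 4 * j := ⟨(l - 12) / 4, by omega⟩
  have hx : 2 ^ (12 + 4 * j) % 8704 ∈ [4096, 4608] :=
    ppow_mem 2 4 8704 12 [4096, 4608] (by decide) (by decide) j
  have hall : ∀ x ∈ [4096, 4608], (3 * x) % 8704 ∈ B8704 := by decide
  have hB : (padovan n + 1) % 8704 ∈ B8704 := by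
    rw [heq, mul_mod_helper]
    exact hall _ hx
  exact notin_8704 n hB

lemma kill_2_4_2 : ∀ n l, 9 ≤ l → l % 4 = 2 → padovan n + 1 ≠ 3 * 2 ^ l := by
  intro n l h1 h2 heq
  obtain ⟨j, rfl⟩ : ∃ j, l = 10 + 4 * j := ⟨(l - 10) / 4, by omega⟩
  have hx : 2 ^ (10 + 4 * j) % 28736 ∈ [1024, 16384, 3520, 27584, 10304, 21184, 22848, 20736, 15680, 20992, 19776, 320, 5120, 24448, 17600, 22976, 22784, 19712, 28032, 17472, 20928, 18752, 12672, 1600, 25600, 7296, 1792, 28672, 27712, 12352, 25216, 1152, 18432, 7552, 5888, 8000, 13056, 7744, 8960, 28416, 23616, 4288, 11136, 5760, 5952, 9024, 704, 11264, 7808, 9984, 16064, 27136, 3136, 21440, 26944, 64] :=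
    ppow_mem 2 4 28736 10 [1024, 16384, 3520, 27584, 10304, 21184, 22848, 20736, 15680, 20992, 19776, 320, 5120, 24448, 17600, 22976, 22784, 19712, 28032, 17472, 20928, 18752, 12672, 1600, 25600, 7296, 1792, 28672, 27712, 12352, 25216, 1152, 18432, 7552, 5888, 8000, 13056, 7744, 8960, 28416, 23616, 4288, 11136, 5760, 5952, 9024, 704, 11264, 7808, 9984, 16064, 27136, 3136, 21440, 26944, 64] (by decide) (by decide) j
  have hall : ∀ x ∈ [1024, 16384, 3520, 27584, 10304, 21184, 22848, 20736, 15680, 20992, 19776, 320, 5120, 24448, 17600, 22976, 22784, 19712, 28032, 17472, 20928, 18752, 12672, 1600, 25600, 7296, 1792, 28672, 27712, 12352, 25216, 1152, 18432, 7552, 5888, 8000, 13056, 7744, 8960, 28416, 23616, 4288, 11136, 5760, 5952, 9024, 704, 11264, 7808, 9984, 16064, 27136, 3136, 21440, 26944, 64], (3 * x) % 28736 ∈ B28736 := by decide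
  have hB : (padovan n + 1) % 28736 ∈ B28736 := by
    rw [heq, mul_mod_helper]
    exact hall _ hx
  exact notin_28736 n hB

lemma kill_2_2_1 : ∀ n l, 9 ≤ l → l % 2 = 1 → padovan n + 1 ≠ 3 * 2 ^ l := by
  intro n l h1 h2 heq
  obtain ⟨j, rfl⟩ : ∃ j, l = 9 + 2 * j := ⟨(l - 9) / 2, by omega⟩
  have hx : 2 ^ (9 + 2 * j) % 14368 ∈ [512, 2048, 8192, 4032, 1760, 7040, 13792, 12064, 5152, 6240, 10592, 13632, 11424, 2592, 10368, 12736, 7840, 2624, 10496, 13248, 9888, 10816, 160, 640, 2560, 10240, 12224, 5792, 8800, 6464, 11488, 2848, 11392, 2464, 9856, 10688, 14016, 12960, 8736, 6208, 10464, 13120, 9376, 8768, 6336, 10976, 800, 3200, 12800, 8096, 3648, 224, 896, 3584, 14336, 14240, 13856, 12320, 6176, 10336, 12608, 7328, 576, 2304, 9216, 8128, 3776, 736, 2944, 11776, 4000, 1632, 6528, 11744, 3872, 1120, 4480, 3552, 14208, 13728, 11808, 4128, 2144, 8576, 5568, 7904, 2880, 11520, 2976, 11904, 4512, 3680, 352,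 1408, 5632, 8160, 3904, 1248, 4992, 5600, 8032, 3392, 13568, 11168, 1568, 6272, 10720, 14144, 13472, 10784, 32, 128] :=
    ppow_mem 2 2 14368 9 [512, 2048, 8192, 4032, 1760, 7040, 13792, 12064, 5152, 6240, 10592, 13632, 11424, 2592, 10368, 12736, 7840, 2624, 10496, 13248, 9888, 10816, 160, 640, 2560, 10240, 12224, 5792, 8800, 6464, 11488, 2848, 11392, 2464, 9856, 10688, 14016, 12960, 8736, 6208, 10464, 13120, 9376, 8768, 6336, 10976, 800, 3200, 12800, 8096, 3648, 224, 896, 3584, 14336, 14240, 13856, 12320, 6176, 10336, 12608, 7328, 576, 2304, 9216, 8128, 3776, 736, 2944, 11776, 4000, 1632, 6528, 11744, 3872, 1120, 4480, 3552, 14208, 13728, 11808, 4128, 2144, 8576, 5568, 7904, 2880, 11520, 2976, 11904, 4512, 3680, 352, 1408, 5632, 8160, 3904, 1248, 4992, 5600, 8032, 3392, 13568, 11168, 1568, 6272, 10720, 14144, 13472, 10784, 32, 128] (by decide) (by decide) j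
  have hall : ∀ x ∈ [512, 2048, 8192, 4032, 1760, 7040, 13792, 12064, 5152, 6240, 10592, 13632, 11424, 2592, 10368, 12736, 7840, 2624, 10496, 13248, 9888, 10816, 160, 640, 2560, 10240, 12224, 5792, 8800, 6464, 11488, 2848, 11392, 2464, 9856, 10688, 14016, 12960, 8736, 6208, 10464, 13120, 9376, 8768, 6336, 10976, 800, 3200, 12800, 8096, 3648, 224, 896, 3584, 14336, 14240, 13856, 12320, 6176, 10336, 12608, 7328, 576, 2304, 9216, 8128, 3776, 736, 2944, 11776, 4000, 1632, 6528, 11744, 3872, 1120, 4480, 3552, 14208, 13728, 11808, 4128, 2144, 8576, 5568, 7904, 2880, 11520, 2976, 11904, 4512, 3680, 352, 1408, 5632, 8160, 3904, 1248, 4992, 5600, 8032, 3392, 13568, 11168, 1568, 6272, 10720, 14144, 13472, 10784, 32, 128], (3 * x) % 14368 ∈ B14368 := by decide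
  have hB : (padovan n + 1) % 14368 ∈ B14368 := by
    rw [heq, mul_mod_helper]
    exact hall _ hx
  exact notin_14368 n hB

lemma kill_3_1_0 : ∀ n l, 2 ≤ l → padovan n + 1 ≠ 4 * 3 ^ l := by
  intro n l h1 heq
  obtain ⟨j, rfl⟩ : ∃ j, l = 2 + 1 * j := ⟨(l - 2) / 1, by omega⟩
  have hx : 3 ^ (2 + 1 * j) % 2475 ∈ [9, 27, 81, 243, 729, 2187, 1611, 2358, 2124, 1422, 1791, 423, 1269, 1332, 1521, 2088, 1314, 1467, 1926, 828] :=
    ppow_mem 3 1 2475 2 [9, 27, 81, 243, 729, 2187, 1611, 2358, 2124, 1422, 1791, 423, 1269, 1332, 1521, 2088, 1314, 1467, 1926, 828] (by decide) (by decide) j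
  have hall : ∀ x ∈ [9, 27, 81, 243, 729, 2187, 1611, 2358, 2124, 1422, 1791, 423, 1269, 1332, 1521, 2088, 1314, 1467, 1926, 828], (4 * x) % 2475 ∈ B2475 := by decide
  have hB : (padovan n + 1) % 2475 ∈ B2475 := by
    rw [heq, mul_mod_helper]
    exact hall _ hx
  exact notin_2475 n hB

lemma kill_4_1_0 : ∀ n l, 1 ≤ l → padovan n + 1 ≠ 5 * 4 ^ l := by
  intro n l h1 heq
  obtain ⟨j, rfl⟩ : ∃ j, l = 1 + 1 * j := ⟨(l - 1) / 1, by omega⟩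
  have hx : 4 ^ (1 + 1 * j) % 46420 ∈ [4, 16, 64, 256, 1024, 4096, 16384, 19116, 30044, 27336, 16504, 19596, 31964, 35016, 804, 3216, 12864, 5036, 20144, 34156, 43784, 35876, 4244, 16976, 21484, 39516, 18804, 28796, 22344, 42956, 32564, 37416, 10404, 41616, 27204, 15976, 17484, 23516, 1224, 4896, 19584, 31916, 34824, 36, 144, 576, 2304, 9216, 36864, 8196, 32784, 38296, 13924, 9276, 37104, 9156, 36624, 7236, 28944, 22936, 45324, 42036, 28884, 22696, 44364, 38196, 13524, 7676, 30704, 29976, 27064, 15416, 15244, 14556, 11804, 796, 3184, 12736, 4524, 18096, 25964, 11016, 44064, 36996, 8724, 34896, 324, 1296, 5184, 20736, 36524, 6836, 27344, 16536, 19724, 32476, 37064, 8996, 35984, 4676, 18704, 28396, 20744, 36556, 6964, 27856, 18584, 27916, 18824, 28876, 22664, 44236, 37684, 11476, 45904, 44356, 38164, 13396, 7164, 28656, 21784, 40716, 23604, 1576, 6304, 25216, 8024, 32096, 35544, 2916, 11664, 236, 944, 3776, 15104, 13996, 9564, 38256, 13764, 8636, 34544, 45336, 42084, 29076, 23464, 1016,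 4064, 16256, 18604, 27996, 19144, 30156, 27784, 18296, 26764, 14216, 10444, 41776, 27844, 18536, 27724, 18056, 25804, 10376, 41504, 26756, 14184, 10316, 41264, 25796, 10344, 41376, 26244, 12136, 2124, 8496, 33984, 43096, 33124, 39656, 19364, 31036, 31304, 32376, 36664, 7396, 29584, 25496, 9144, 36576, 7044, 28176, 19864, 33036, 39304, 17956, 25404, 8776, 35104, 1156, 4624, 18496, 27564, 17416, 23244, 136, 544, 2176, 8704, 34816] :=
    ppow_mem 4 1 46420 1 [4, 16, 64, 256, 1024, 4096, 16384, 19116, 30044, 27336, 16504, 19596, 31964, 35016, 804, 3216, 12864, 5036, 20144, 34156, 43784, 35876, 4244, 16976, 21484, 39516, 18804, 28796, 22344, 42956, 32564, 37416, 10404, 41616, 27204, 15976, 17484, 23516, 1224, 4896, 19584, 31916, 34824, 36, 144, 576, 2304, 9216, 36864, 8196, 32784, 38296, 13924, 9276, 37104, 9156, 36624, 7236, 28944, 22936, 45324, 42036, 28884, 22696, 44364, 38196, 13524, 7676, 30704, 29976, 27064, 15416, 15244, 14556, 11804, 796, 3184, 12736, 4524, 18096, 25964, 11016, 44064, 36996,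 8724, 34896, 324, 1296, 5184, 20736, 36524, 6836, 27344, 16536, 19724, 32476, 37064, 8996, 35984, 4676, 18704, 28396, 20744, 36556, 6964, 27856, 18584, 27916, 18824, 28876, 22664, 44236, 37684, 11476, 45904, 44356, 38164, 13396, 7164, 28656, 21784, 40716, 23604, 1576, 6304, 25216, 8024, 32096, 35544, 2916, 11664, 236, 944, 3776, 15104, 13996, 9564, 38256, 13764, 8636, 34544, 45336, 42084, 29076, 23464, 1016, 4064, 16256, 18604, 27996, 19144, 30156, 27784, 18296, 26764, 14216, 10444, 41776, 27844, 18536, 27724, 18056, 25804, 10376, 41504, 26756, 14184, 10316, 41264, 25796, 10344, 41376, 26244, 12136, 2124, 8496, 33984, 43096, 33124, 39656, 19364, 31036, 31304, 32376, 36664, 7396, 29584, 25496, 9144, 36576, 7044, 28176, 19864, 33036, 39304, 17956, 25404, 8776, 35104, 1156, 4624, 18496, 27564, 17416, 23244, 136, 544, 2176, 8704, 34816] (by decide) (by decide) j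
  have hall : ∀ x ∈ [4, 16, 64, 256, 1024, 4096, 16384, 19116, 30044, 27336, 16504, 19596, 31964, 35016, 804, 3216, 12864, 5036, 20144, 34156, 43784, 35876, 4244, 16976, 21484, 39516, 18804, 28796, 22344, 42956, 32564, 37416, 10404, 41616, 27204, 15976, 17484, 23516, 1224, 4896, 19584, 31916, 34824, 36, 144, 576, 2304, 9216, 36864, 8196, 32784, 38296, 13924, 9276, 37104, 9156, 36624, 7236, 28944, 22936, 45324, 42036, 28884, 22696, 44364, 38196, 13524, 7676, 30704, 29976, 27064, 15416, 15244, 14556, 11804, 796, 3184, 12736, 4524, 18096, 25964, 11016, 44064, 36996, 8724, 34896, 324, 1296, 5184, 20736, 36524, 6836, 27344, 16536, 19724, 32476, 37064, 8996, 35984, 4676, 18704, 28396, 20744, 36556, 6964, 27856, 18584, 27916, 18824, 28876, 22664, 44236, 37684, 11476, 45904, 44356, 38164, 13396, 7164, 28656, 21784, 40716, 23604, 1576, 6304, 25216, 8024, 32096, 35544, 2916, 11664, 236, 944, 3776, 15104, 13996, 9564, 38256, 13764, 8636, 34544, 45336, 42084, 29076, 23464, 1016, 4064, 16256, 18604, 27996,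 19144, 30156, 27784, 18296, 26764, 14216, 10444, 41776, 27844, 18536, 27724, 18056, 25804, 10376, 41504, 26756, 14184, 10316, 41264, 25796, 10344, 41376, 26244, 12136, 2124, 8496, 33984, 43096, 33124, 39656, 19364, 31036, 31304, 32376, 36664, 7396, 29584, 25496, 9144, 36576, 7044, 28176, 19864, 33036, 39304, 17956, 25404, 8776, 35104, 1156, 4624, 18496, 27564, 17416, 23244, 136, 544, 2176, 8704, 34816], (5 * x) % 46420 ∈ B46420 := by decide
  have hB : (padovan n + 1) % 46420 ∈ B46420 := by
    rw [heq, mul_mod_helper]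
    exact hall _ hx
  exact notin_46420 n hB

lemma kill_5_1_0 : ∀ n l, 1 ≤ l → padovan n + 1 ≠ 6 * 5 ^ l := by
  intro n l h1 heq
  obtain ⟨j, rfl⟩ : ∃ j, l = 1 + 1 * j := ⟨(l - 1) / 1, by omega⟩
  have hx : 5 ^ (1 + 1 * j) % 36575 ∈ [5, 25, 125, 625, 3125, 15625, 4975, 24875, 14650, 100, 500, 2500, 12500, 25925, 19900, 26350, 22025, 400, 2000, 10000, 13425, 30550, 6450, 32250, 14950, 1600, 8000, 3425, 17125, 12475, 25800, 19275, 23225, 6400, 32000, 13700, 31925, 13325, 30050, 3950, 19750, 25600, 18275, 18225, 17975, 16725, 10475, 15800, 5850, 29250, 36525, 36325, 35325, 30325, 5325, 26625, 23400, 7275, 36375, 35575, 31575, 11575, 21300, 33350, 20450, 29100, 35775, 32575, 16575, 9725, 12050, 23675, 8650, 6675, 33375, 20575, 29725, 2325, 11625, 21550, 34600, 26700, 23775, 9150, 9175, 9300, 9925, 13050, 28675, 33650, 21950] :=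
    ppow_mem 5 1 36575 1 [5, 25, 125, 625, 3125, 15625, 4975, 24875, 14650, 100, 500, 2500, 12500, 25925, 19900, 26350, 22025, 400, 2000, 10000, 13425, 30550, 6450, 32250, 14950, 1600, 8000, 3425, 17125, 12475, 25800, 19275, 23225, 6400, 32000, 13700, 31925, 13325, 30050, 3950, 19750, 25600, 18275, 18225, 17975, 16725, 10475, 15800, 5850, 29250, 36525, 36325, 35325, 30325, 5325, 26625, 23400, 7275, 36375, 35575, 31575, 11575, 21300, 33350, 20450, 29100, 35775, 32575, 16575, 9725, 12050, 23675, 8650, 6675, 33375, 20575, 29725, 2325, 11625, 21550, 34600, 26700, 23775, 9150, 9175, 9300, 9925, 13050, 28675, 33650, 21950] (by decide) (by decide) j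
  have hall : ∀ x ∈ [5, 25, 125, 625, 3125, 15625, 4975, 24875, 14650, 100, 500, 2500, 12500, 25925, 19900, 26350, 22025, 400, 2000, 10000, 13425, 30550, 6450, 32250, 14950, 1600, 8000, 3425, 17125, 12475, 25800, 19275, 23225, 6400, 32000, 13700, 31925, 13325, 30050, 3950, 19750, 25600, 18275, 18225, 17975, 16725, 10475, 15800, 5850, 29250, 36525, 36325, 35325, 30325, 5325, 26625, 23400, 7275, 36375, 35575, 31575, 11575, 21300, 33350, 20450, 29100, 35775, 32575, 16575, 9725, 12050, 23675, 8650, 6675, 33375, 20575, 29725, 2325, 11625, 21550, 34600, 26700, 23775, 9150, 9175, 9300, 9925, 13050, 28675, 33650, 21950], (6 * x) % 36575 ∈ B36575 := by decide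
  have hB : (padovan n + 1) % 36575 ∈ B36575 := by
    rw [heq, mul_mod_helper]
    exact hall _ hx
  exact notin_36575 n hB

lemma kill_6_1_0 : ∀ n l, 1 ≤ l → padovan n + 1 ≠ 7 * 6 ^ l := by
  intro n l h1 heq
  obtain ⟨j, rfl⟩ : ∃ j, l = 1 + 1 * j := ⟨(l - 1) / 1, by omega⟩
  have hx : 6 ^ (1 + 1 * j) % 35 ∈ [6, 1] :=
    ppow_mem 6 1 35 1 [6, 1] (by decide) (by decide) j
  have hall : ∀ x ∈ [6, 1], (7 * x) % 35 ∈ B35 := by decide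
  have hB : (padovan n + 1) % 35 ∈ B35 := by
    rw [heq, mul_mod_helper]
    exact hall _ hx
  exact notin_35 n hB

lemma kill_7_1_0 : ∀ n l, 1 ≤ l → padovan n + 1 ≠ 8 * 7 ^ l := by
  intro n l h1 heq
  obtain ⟨j, rfl⟩ : ∃ j, l = 1 + 1 * j := ⟨(l - 1) / 1, by omega⟩
  have hx : 7 ^ (1 + 1 * j) % 112 ∈ [7, 49] :=
    ppow_mem 7 1 112 1 [7, 49] (by decide) (by decide) j
  have hall : ∀ x ∈ [7, 49], (8 * x) % 112 ∈ B112 := by decide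
  have hB : (padovan n + 1) % 112 ∈ B112 := by
    rw [heq, mul_mod_helper]
    exact hall _ hx
  exact notin_112 n hB

lemma kill_8_1_0 : ∀ n l, 2 ≤ l → padovan n + 1 ≠ 9 * 8 ^ l := by
  intro n l h1 heq
  obtain ⟨j, rfl⟩ : ∃ j, l = 2 + 1 * j := ⟨(l - 2) / 1, by omega⟩
  have hx : 8 ^ (2 + 1 * j) % 30800 ∈ [64, 512, 4096, 1968, 15744, 2752, 22016, 22128, 23024, 30192, 25936, 22688, 27504, 4432, 4656, 6448, 20784, 12272, 5776, 15408] :=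
    ppow_mem 8 1 30800 2 [64, 512, 4096, 1968, 15744, 2752, 22016, 22128, 23024, 30192, 25936, 22688, 27504, 4432, 4656, 6448, 20784, 12272, 5776, 15408] (by decide) (by decide) j
  have hall : ∀ x ∈ [64, 512, 4096, 1968, 15744, 2752, 22016, 22128, 23024, 30192, 25936, 22688, 27504, 4432, 4656, 6448, 20784, 12272, 5776, 15408], (9 * x) % 30800 ∈ B30800 := by decide
  have hB : (padovan n + 1) % 30800 ∈ B30800 := by
    rw [heq, mul_mod_helper]
    exact hall _ hx
  exact notin_30800 n hB

lemma kill_9_2_0 : ∀ n l, 1 ≤ l → l % 2 = 0 → padovan n + 1 ≠ 10 * 9 ^ l := by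
  intro n l h1 h2 heq
  obtain ⟨j, rfl⟩ : ∃ j, l = 2 + 2 * j := ⟨(l - 2) / 2, by omega⟩
  have hx : 9 ^ (2 + 2 * j) % 21465 ∈ [81, 6561, 16281, 9396, 9801, 21141, 16686, 20736, 5346, 3726, 1296, 19116, 2916] :=
    ppow_mem 9 2 21465 2 [81, 6561, 16281, 9396, 9801, 21141, 16686, 20736, 5346, 3726, 1296, 19116, 2916] (by decide) (by decide) j
  have hall : ∀ x ∈ [81, 6561, 16281, 9396, 9801, 21141, 16686, 20736, 5346, 3726, 1296, 19116, 2916], (10 * x) % 21465 ∈ B21465 := by decide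
  have hB : (padovan n + 1) % 21465 ∈ B21465 := by
    rw [heq, mul_mod_helper]
    exact hall _ hx
  exact notin_21465 n hB

lemma kill_9_2_1 : ∀ n l, 1 ≤ l → l % 2 = 1 → padovan n + 1 ≠ 10 * 9 ^ l := by
  intro n l h1 h2 heq
  obtain ⟨j, rfl⟩ : ∃ j, l = 1 + 2 * j := ⟨(l - 1) / 2, by omega⟩
  have hx : 9 ^ (1 + 2 * j) % 28736 ∈ [9, 729, 1577, 12793, 1737, 25753, 17001, 26489, 19145, 27737, 5289, 26105, 16777, 8345, 15017, 9465, 19529, 1369, 24681, 16377, 4681, 5593, 21993, 28537, 12617, 16217, 20457, 19065, 21257, 26393, 11369, 1337, 22089, 7577, 10281, 28153, 10249, 25561, 1449, 2425, 24009, 19417, 21033, 8249, 7241, 11801, 7593, 11577, 18185, 7449, 28649, 21689, 3913, 857, 11945, 19257, 8073, 21721, 6505, 9657, 6345, 25433, 19817, 24697, 17673, 23449, 2793, 25081, 20041, 14105, 21801, 12985, 17289, 21081, 12137, 6073, 3401, 16857, 14825, 22649, 24201, 6233, 16361, 3385, 15561, 24793, 25449, 21113, 14729, 14873, 26537, 23033,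 26569, 25625, 6633, 20025, 12809, 3033, 15785, 14201, 841, 10649, 489, 10873, 18633, 15001, 8169, 761, 4169, 21593, 24873, 3193] :=
    ppow_mem 9 2 28736 1 [9, 729, 1577, 12793, 1737, 25753, 17001, 26489, 19145, 27737, 5289, 26105, 16777, 8345, 15017, 9465, 19529, 1369, 24681, 16377, 4681, 5593, 21993, 28537, 12617, 16217, 20457, 19065, 21257, 26393, 11369, 1337, 22089, 7577, 10281, 28153, 10249, 25561, 1449, 2425, 24009, 19417, 21033, 8249, 7241, 11801, 7593, 11577, 18185, 7449, 28649, 21689, 3913, 857, 11945, 19257, 8073, 21721, 6505, 9657, 6345, 25433, 19817, 24697, 17673, 23449, 2793, 25081, 20041, 14105, 21801, 12985, 17289, 21081, 12137, 6073, 3401, 16857, 14825, 22649, 24201, 6233, 16361, 3385, 15561, 24793, 25449, 21113, 14729, 14873, 26537, 23033, 26569, 25625, 6633, 20025, 12809, 3033, 15785, 14201, 841, 10649, 489, 10873, 18633, 15001, 8169, 761, 4169, 21593, 24873, 3193] (by decide) (by decide) j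
  have hall : ∀ x ∈ [9, 729, 1577, 12793, 1737, 25753, 17001, 26489, 19145, 27737, 5289, 26105, 16777, 8345, 15017, 9465, 19529, 1369, 24681, 16377, 4681, 5593, 21993, 28537, 12617, 16217, 20457, 19065, 21257, 26393, 11369, 1337, 22089, 7577, 10281, 28153, 10249, 25561, 1449, 2425, 24009, 19417, 21033, 8249, 7241, 11801, 7593, 11577, 18185, 7449, 28649, 21689, 3913, 857, 11945, 19257, 8073, 21721, 6505, 9657, 6345, 25433, 19817, 24697, 17673, 23449, 2793, 25081, 20041, 14105, 21801, 12985, 17289, 21081, 12137, 6073, 3401, 16857, 14825, 22649, 24201, 6233, 16361, 3385, 15561, 24793, 25449, 21113, 14729, 14873, 26537, 23033, 26569, 25625, 6633, 20025, 12809, 3033, 15785, 14201, 841, 10649, 489, 10873, 18633, 15001, 8169, 761, 4169, 21593, 24873, 3193], (10 * x) % 28736 ∈ B28736 := by decide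
  have hB : (padovan n + 1) % 28736 ∈ B28736 := by
    rw [heq, mul_mod_helper]
    exact hall _ hx
  exact notin_28736 n hB

lemma kill_10_1_0 : ∀ n l, 1 ≤ l → padovan n + 1 ≠ 11 * 10 ^ l := by
  intro n l h1 heq
  obtain ⟨j, rfl⟩ : ∃ j, l = 1 + 1 * j := ⟨(l - 1) / 1, by omega⟩
  have hx : 10 ^ (1 + 1 * j) % 7184 ∈ [10, 100, 1000, 2816, 6608, 1424, 7056, 5904, 1568, 1312, 5936, 1888, 4512, 2016, 5792, 448, 4480, 1696, 2592, 4368, 576, 5760, 128, 1280, 5616, 5872, 1248, 5296, 2672, 5168, 1392, 6736, 2704, 5488, 4592] :=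
    ppow_mem 10 1 7184 1 [10, 100, 1000, 2816, 6608, 1424, 7056, 5904, 1568, 1312, 5936, 1888, 4512, 2016, 5792, 448, 4480, 1696, 2592, 4368, 576, 5760, 128, 1280, 5616, 5872, 1248, 5296, 2672, 5168, 1392, 6736, 2704, 5488, 4592] (by decide) (by decide) j
  have hall : ∀ x ∈ [10, 100, 1000, 2816, 6608, 1424, 7056, 5904, 1568, 1312, 5936, 1888, 4512, 2016, 5792, 448, 4480, 1696, 2592, 4368, 576, 5760, 128, 1280, 5616, 5872, 1248, 5296, 2672, 5168, 1392, 6736, 2704, 5488, 4592], (11 * x) % 7184 ∈ B7184 := by decide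
  have hB : (padovan n + 1) % 7184 ∈ B7184 := by
    rw [heq, mul_mod_helper]
    exact hall _ hx
  exact notin_7184 n hB

theorem padovan_thabit_first :
    (∀ n b l : ℕ, 2 ≤ b → b ≤ 10 → 1 ≤ l →
      ((padovan n : ℤ) = ((b : ℤ) + 1) * (b : ℤ) ^ l - 1 ↔ (n, b, l) = (7, 2, 1))) ∧
    padovan 7 = 5 := by
  refine ⟨?_, by decide⟩
  intro n b l hb hb' hl
  constructor
  · intro h
    have h1 : ((padovan n : ℤ) + 1) = ((b:ℤ)+1)*(b:ℤ)^l := by linarith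
    have hN : padovan n + 1 = (b + 1) * b ^ l := by exact_mod_cast h1
    interval_cases b
    · -- b = 2
      by_cases hl8 : l ≤ 8
      · interval_cases l
        · have h5 : padovan n = 5 := by norm_num at hN; omega
          have := pad_eq_five n h5
          simp [this]
        · exact absurd (by norm_num at hN; omega : padovan n = 11) (pad_ne 11 (by norm_num) (by decide) n)
        · exact absurd (by norm_num at hN; omega : padovan n = 23) (pad_ne 23 (by norm_num) (by decide) n)
        · exact absurd (by norm_num at hN; omega : padovan n = 47) (pad_ne 47 (by norm_num) (by decide) n)
        · exact absurd (by norm_num at hN; omega : padovan n = 95) (pad_ne 95 (by norm_num) (by decide) n)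
        · exact absurd (by norm_num at hN; omega : padovan n = 191) (pad_ne 191 (by norm_num) (by decide) n)
        · exact absurd (by norm_num at hN; omega : padovan n = 383) (pad_ne 383 (by norm_num) (by decide) n)
        · exact absurd (by norm_num at hN; omega : padovan n = 767) (pad_ne 767 (by norm_num) (by decide) n)
      · have h9 : 9 ≤ l := by omega
        have hm : l % 4 = 0 ∨ l % 4 = 1 ∨ l % 4 = 2 ∨ l % 4 = 3 := by omega
        rcases hm with hm | hm | hm | hm
        · exact absurd hN (kill_2_4_0 n l h9 hm)
        · exact absurd hN (kill_2_2_1 n l h9 (by omega))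
        · exact absurd hN (kill_2_4_2 n l h9 hm)
        · exact absurd hN (kill_2_2_1 n l h9 (by omega))
    · -- b = 3
      by_cases hl1 : l = 1
      · subst hl1
        exact absurd (by norm_num at hN; omega : padovan n = 11) (pad_ne 11 (by norm_num) (by decide) n)
      · exact absurd hN (kill_3_1_0 n l (by omega))
    · exact absurd hN (kill_4_1_0 n l hl)
    · exact absurd hN (kill_5_1_0 n l hl)
    · exact absurd hN (kill_6_1_0 n l hl)
    · exact absurd hN (kill_7_1_0 n l hl)
    · -- b = 8
      by_cases hl1 : l = 1
      · subst hl1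
        exact absurd (by norm_num at hN; omega : padovan n = 71) (pad_ne 71 (by norm_num) (by decide) n)
      · exact absurd hN (kill_8_1_0 n l (by omega))
    · -- b = 9
      have hm : l % 2 = 0 ∨ l % 2 = 1 := by omega
      rcases hm with hm | hm
      · exact absurd hN (kill_9_2_0 n l hl hm)
      · exact absurd hN (kill_9_2_1 n l hl hm)
    · exact absurd hN (kill_10_1_0 n l hl)
  · intro h
    obtain ⟨rfl, rfl, rfl⟩ : n = 7 ∧ b = 2 ∧ l = 1 := by
      simpa [Prod.ext_iff] using h
    norm_num
    decide
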